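/- Let Ω = diag(b) with b_i > 0 summing to 1, ω = b, and let 𝒜(α) = A + α𝒫W𝒫^{-1} where Ω A + A^T Ω = ω ω^T, 𝒫^T Ω 𝒫 = I, and W is skew-symmetric. Then for every α ∈ ℝ, the quadratic form x^T(Ω𝒜(α) + 𝒜(α)^TΩ)x equals (ω^T x)² for all x ∈ ℝ^s; in particular the symmetric part of Ω𝒜(α) is independent of α. -/
import Mathlib

open Matrix

theorem stmt_15 (s : ℕ) (A P W : Matrix (Fin s) (Fin s) ℝ) (b : Fin s → ℝ)
    (hb : ∀ i, 0 < b i) (hsum : ∑ i, b i = 1)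
    (hA : Matrix.diagonal b * A + Aᵀ * Matrix.diagonal b = Matrix.vecMulVec b b)
    (hP : IsUnit P) (hPO : Pᵀ * Matrix.diagonal b * P = 1)
    (hW : Wᵀ = -W) :
    ∀ α : ℝ, ∀ x : Fin s → ℝ,
      x ⬝ᵥ (Matrix.diagonal b * (A + α • (P * W * P⁻¹))
          + (A + α • (P * W * P⁻¹))ᵀ * Matrix.diagonal b).mulVec x
        = (b ⬝ᵥ x) ^ 2 := by
  intro α x
  have hinv : P⁻¹ = Pᵀ * Matrix.diagonal b := Matrix.inv_eq_left_inv hPO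
  have hM : Matrix.diagonal b * (A + α • (P * W * P⁻¹))
      + (A + α • (P * W * P⁻¹))ᵀ * Matrix.diagonal b = Matrix.vecMulVec b b := by
    rw [hinv, ← hA]
    simp only [Matrix.transpose_add, Matrix.transpose_smul, Matrix.transpose_mul,
      Matrix.diagonal_transpose, hW]
    simp only [Matrix.transpose_transpose, Matrix.mul_add, Matrix.add_mul,
      Matrix.mul_smul, Matrix.smul_mul, neg_one_smul, Matrix.neg_mul, Matrix.mul_neg,
      smul_neg, Matrix.mul_assoc]
    abel
  rw [hM]
  simp only [Matrix.mulVec, dotProduct, Matrix.vecMulVec_apply, Finset.mul_sum]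
  rw [sq, Finset.sum_mul]
  exact Finset.sum_congr rfl fun i _ => by rw [Finset.mul_sum]; exact Finset.sum_congr rfl fun j _ => by ring
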